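/- Define f(θ) = √(1 - 8cos(2θ) - 8cos(4θ)), ρ₁(θ) = (1/(8√2))·(√(f(θ) - 3)/(cos θ · cos(2θ)))·(f(θ) + 3 + 4cos(2θ)), and ρ₂(θ) = -√((f(θ) - 3)/2) for θ ∈ (π/4, π/3]. Then: (i) ρ₁(θ) → 0 and ρ₂(θ) → 0 as θ → π/3 from the left; (ii) ρ₁(θ) → -∞ and ρ₂(θ) → 0 as θ → π/4 from the right. -/

import Mathlib

open Filter

/-- `f(θ) = √(1 - 8cos(2θ) - 8cos(4θ))`. -/
noncomputable def fH (θ : ℝ) : ℝ :=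
  Real.sqrt (1 - 8 * Real.cos (2 * θ) - 8 * Real.cos (4 * θ))

/-- `ρ₁(θ) = (1/(8√2))·(√(f(θ)-3)/(cos θ cos 2θ))·(f(θ)+3+4cos 2θ)`. -/
noncomputable def ρ₁ (θ : ℝ) : ℝ :=
  (1 / (8 * Real.sqrt 2)) * (Real.sqrt (fH θ - 3) / (Real.cos θ * Real.cos (2 * θ))) *
    (fH θ + 3 + 4 * Real.cos (2 * θ))

/-- `ρ₂(θ) = -√((f(θ)-3)/2)`. -/
noncomputable def ρ₂ (θ : ℝ) : ℝ := -Real.sqrt ((fH θ - 3) / 2)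

/-! At `π/3` and `π/4` one has `f = 3`, so `ρ₂ → 0` at both ends, and `ρ₁ → 0` at `π/3`, where
`cos θ cos 2θ ≠ 0`, by continuity. Near `π/4` put `c = cos 2θ → 0⁻`. Then
`f - 3 = 8 (1 + 2c) (-c) / (f + 3)`, so `√(f - 3) / c ≈ -(2/√3) / √(-c) → -∞`, while the
remaining factor `(f + 3 + 4c) / (8√2 cos θ)` of `ρ₁` tends to `3/4`. -/

open Topology Real

noncomputable def fOfCos (c : ℝ) : ℝ :=
  √(9 - 8 * c - 16 * c ^ 2)

lemma fH_eq_fOfCos (θ : ℝ) : fH θ = fOfCos (cos (2 * θ)) := by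
  have h : cos (4 * θ) = 2 * cos (2 * θ) ^ 2 - 1 := by
    rw [show 4 * θ = 2 * (2 * θ) by ring, cos_two_mul]
  rw [fH, fOfCos, h]
  ring_nf

@[fun_prop]
lemma continuous_fOfCos : Continuous fOfCos := by
  unfold fOfCos
  fun_prop

@[fun_prop]
lemma continuous_fH : Continuous fH := by
  unfold fH
  fun_prop

lemma fOfCos_zero : fOfCos 0 = 3 := by
  rw [fOfCos, show (9 : ℝ) - 8 * 0 - 16 * 0 ^ 2 = 3 ^ 2 by norm_num, sqrt_sq zero_le_three]

lemma fOfCos_neg_half : fOfCos (-(1 / 2)) = 3 := by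
  rw [fOfCos, show (9 : ℝ) - 8 * -(1 / 2) - 16 * (-(1 / 2)) ^ 2 = 3 ^ 2 by norm_num,
    sqrt_sq zero_le_three]

lemma cos_two_mul_pi_div_three : cos (2 * (π / 3)) = -(1 / 2) := by
  rw [show 2 * (π / 3) = π - π / 3 by ring, cos_pi_sub, cos_pi_div_three]

lemma cos_two_mul_pi_div_four : cos (2 * (π / 4)) = 0 := by
  rw [show 2 * (π / 4) = π / 2 by ring, cos_pi_div_two]

lemma fH_pi_div_three : fH (π / 3) = 3 := by
  rw [fH_eq_fOfCos, cos_two_mul_pi_div_three, fOfCos_neg_half]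

lemma fH_pi_div_four : fH (π / 4) = 3 := by
  rw [fH_eq_fOfCos, cos_two_mul_pi_div_four, fOfCos_zero]

/-- Rationalizing `f - 3 = (f² - 9) / (f + 3)` exposes the factor `-c` that vanishes at `c = 0`. -/
lemma fOfCos_sub_three {c : ℝ} (hrad : 0 ≤ 9 - 8 * c - 16 * c ^ 2) :
    fOfCos c - 3 = 8 * (1 + 2 * c) / (fOfCos c + 3) * -c := by
  have hpos : 0 < fOfCos c + 3 := by unfold fOfCos; positivity
  have hsq : fOfCos c ^ 2 = 9 - 8 * c - 16 * c ^ 2 := sq_sqrt hrad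
  field_simp
  linear_combination hsq

lemma sqrt_fOfCos_sub_three_div {c : ℝ} (hc : c < 0) (hrad : 0 ≤ 9 - 8 * c - 16 * c ^ 2) :
    √(fOfCos c - 3) / c = -√(8 * (1 + 2 * c) / (fOfCos c + 3)) * (√(-c))⁻¹ := by
  have hsqrt : √(-c) ^ 2 = -c := sq_sqrt (by linarith)
  have hne : √(-c) ≠ 0 := (sqrt_pos.2 (by linarith)).ne'
  rw [fOfCos_sub_three hrad, sqrt_mul' _ (by linarith), div_eq_iff hc.ne]
  field_simp
  linear_combination √(8 * (1 + 2 * c) / (fOfCos c + 3)) * hsqrt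

lemma tendsto_sqrt_fOfCos_sub_three_div_nhdsLT_zero :
    Tendsto (fun c => √(fOfCos c - 3) / c) (𝓝[<] 0) atBot := by
  have hnum : Tendsto (fun c => -√(8 * (1 + 2 * c) / (fOfCos c + 3))) (𝓝[<] 0)
      (𝓝 (-√(8 * (1 + 2 * 0) / (fOfCos 0 + 3)))) := by
    refine tendsto_nhdsWithin_of_tendsto_nhds (Continuous.tendsto ?_ 0)
    have : ∀ c, fOfCos c + 3 ≠ 0 := fun c => by unfold fOfCos; positivity
    fun_prop (disch := exact this _)
  have hden : Tendsto (fun c : ℝ => √(-c)) (𝓝[<] 0) (𝓝[>] 0) := by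
    refine tendsto_nhdsWithin_of_tendsto_nhds_of_eventually_within _ ?_ ?_
    · simpa using (continuous_neg.sqrt.tendsto (0 : ℝ)).mono_left nhdsWithin_le_nhds
    · filter_upwards [self_mem_nhdsWithin] with c hc
      exact sqrt_pos.2 (neg_pos.2 hc)
  have hlim := hnum.neg_mul_atTop (by rw [fOfCos_zero]; norm_num)
    hden.inv_tendsto_nhdsGT_zero
  refine hlim.congr' ?_
  filter_upwards [Ioo_mem_nhdsLT (show (-(1 / 2) : ℝ) < 0 by norm_num)] with c hc
  exact (sqrt_fOfCos_sub_three_div hc.2 (by nlinarith [hc.1, hc.2])).symm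

lemma tendsto_cos_two_mul_nhdsGT_pi_div_four :
    Tendsto (fun θ => cos (2 * θ)) (𝓝[>] (π / 4)) (𝓝[<] 0) := by
  refine tendsto_nhdsWithin_of_tendsto_nhds_of_eventually_within _ ?_ ?_
  · rw [← cos_two_mul_pi_div_four]
    exact (Continuous.tendsto (by fun_prop) _).mono_left nhdsWithin_le_nhds
  · filter_upwards [Ioo_mem_nhdsGT (show π / 4 < 3 * π / 4 by linarith [pi_pos])] with θ hθ
    exact cos_neg_of_pi_div_two_lt_of_lt (by linarith [hθ.1]) (by linarith [hθ.2])

/-- The factor of `ρ₁` that stays bounded away from `0` and `∞` near `π/4`. -/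
noncomputable def ρ₁Coeff (θ : ℝ) : ℝ :=
  (fH θ + 3 + 4 * cos (2 * θ)) / (8 * √2 * cos θ)

lemma ρ₁_eq (θ : ℝ) : ρ₁ θ = ρ₁Coeff θ * (√(fH θ - 3) / cos (2 * θ)) := by
  rw [ρ₁, ρ₁Coeff]
  ring

lemma tendsto_ρ₁_nhdsGT_pi_div_four : Tendsto ρ₁ (𝓝[>] (π / 4)) atBot := by
  have hcoeff : Tendsto ρ₁Coeff (𝓝[>] (π / 4)) (𝓝 (ρ₁Coeff (π / 4))) := by
    refine tendsto_nhdsWithin_of_tendsto_nhds (ContinuousAt.tendsto ?_)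
    unfold ρ₁Coeff
    fun_prop (disch := simp)
  have hsing : Tendsto (fun θ => √(fH θ - 3) / cos (2 * θ)) (𝓝[>] (π / 4)) atBot := by
    simp only [fH_eq_fOfCos]
    exact
      tendsto_sqrt_fOfCos_sub_three_div_nhdsLT_zero.comp tendsto_cos_two_mul_nhdsGT_pi_div_four
  rw [show ρ₁ = _ from funext ρ₁_eq]
  exact hcoeff.pos_mul_atBot
    (by rw [ρ₁Coeff, fH_pi_div_four, cos_two_mul_pi_div_four, cos_pi_div_four]; positivity) hsing

lemma continuousAt_ρ₁_pi_div_three : ContinuousAt ρ₁ (π / 3) := by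
  have hcos : cos (π / 3) * cos (2 * (π / 3)) ≠ 0 := by
    rw [cos_two_mul_pi_div_three, cos_pi_div_three]; norm_num
  unfold ρ₁
  fun_prop (disch := exact hcos)

lemma ρ₁_pi_div_three : ρ₁ (π / 3) = 0 := by
  simp [ρ₁, fH_pi_div_three]

lemma tendsto_ρ₂_of_fH_eq_three {a : ℝ} (ha : fH a = 3) : Tendsto ρ₂ (𝓝 a) (𝓝 0) := by
  have hcont : Continuous ρ₂ := by unfold ρ₂; fun_prop
  simpa [ρ₂, ha] using hcont.tendsto a

theorem limits_of_the_one_parameter_family :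
    Tendsto ρ₁ (nhdsWithin (Real.pi / 3) (Set.Iio (Real.pi / 3))) (nhds 0) ∧
    Tendsto ρ₂ (nhdsWithin (Real.pi / 3) (Set.Iio (Real.pi / 3))) (nhds 0) ∧
    Tendsto ρ₁ (nhdsWithin (Real.pi / 4) (Set.Ioi (Real.pi / 4))) atBot ∧
    Tendsto ρ₂ (nhdsWithin (Real.pi / 4) (Set.Ioi (Real.pi / 4))) (nhds 0) := by
  refine ⟨?_, ?_, tendsto_ρ₁_nhdsGT_pi_div_four, ?_⟩
  · simpa [ρ₁_pi_div_three] using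
      tendsto_nhdsWithin_of_tendsto_nhds continuousAt_ρ₁_pi_div_three.tendsto
  · exact tendsto_nhdsWithin_of_tendsto_nhds (tendsto_ρ₂_of_fH_eq_three fH_pi_div_three)
  · exact tendsto_nhdsWithin_of_tendsto_nhds (tendsto_ρ₂_of_fH_eq_three fH_pi_div_four)
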